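/- Let δ_L < δ_U be real numbers, let δ ∈ ℝ satisfy δ < δ_L, let Λ > 0 and z ∈ ℝ. Define τ : (0,∞) → ℝ by τ(c) = Φ(√(c/Λ)·(δ_U − δ) − z) − Φ(√(c/Λ)·(δ_L − δ) − z). Then the derivative of the map c ↦ logit(τ(c)) converges, as c → ∞, to −(δ_L − δ)²/(2Λ). -/

import Mathlib

set_option maxHeartbeats 1000000
open MeasureTheory


open Filter Set

/-- The standard normal cumulative distribution function. -/
noncomputable def Phi (x : ℝ) : ℝ :=
  (2 * Real.pi) ^ (-(1 : ℝ) / 2) * ∫ t in Set.Iic x, Real.exp (-t ^ 2 / 2)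

/-- The logit function, `logit x = log x - log (1 - x)`. -/
noncomputable def logit (x : ℝ) : ℝ := Real.log x - Real.log (1 - x)


noncomputable def E (t : ℝ) : ℝ := Real.exp (-t ^ 2 / 2)

lemma E_eq (t : ℝ) : E t = Real.exp (-(1/2) * t ^ 2) := by unfold E; ring_nf

lemma E_pos (t : ℝ) : 0 < E t := Real.exp_pos _

lemma hE_int : Integrable E := by
  have h := integrable_exp_neg_mul_sq (by norm_num : (0:ℝ) < 1/2)
  exact h.congr (by filter_upwards with t using (E_eq t).symm)

lemma setIntegral_E_pos {s : Set ℝ} (hs : MeasurableSet s) (h : 0 < MeasureTheory.volume s) :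
    0 < ∫ t in s, E t := by
  rw [setIntegral_pos_iff_support_of_nonneg_ae]
  · have : Function.support E = Set.univ := by
      ext t; simp [Function.support, (E_pos t).ne']
    rw [this]; simpa using h
  · filter_upwards with t using (E_pos t).le
  · exact hE_int.integrableOn

noncomputable def G (x : ℝ) : ℝ := ∫ t in Set.Ioi x, E t

lemma G_pos (x : ℝ) : 0 < G x :=
  setIntegral_E_pos measurableSet_Ioi (by simp)

lemma G_nonneg (x : ℝ) : 0 ≤ G x := (G_pos x).le

lemma E_tendsto_zero : Tendsto E atTop (nhds 0) := by
  apply Real.tendsto_exp_atBot.comp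
  have h1 : Tendsto (fun t : ℝ => t ^ 2) atTop atTop :=
    tendsto_pow_atTop (by norm_num)
  have h2 : Tendsto (fun t : ℝ => -t ^ 2) atTop atBot := tendsto_neg_atTop_atBot.comp h1
  simpa [div_eq_mul_inv] using h2.atBot_mul_const (by norm_num : (0:ℝ) < 1/2)

lemma hasDerivAt_negE (t : ℝ) : HasDerivAt (fun u => -E u) (t * E t) t := by
  unfold E
  have h1 : HasDerivAt (fun u : ℝ => -u ^ 2 / 2) (-t) t := by
    have := ((hasDerivAt_pow 2 t).neg).div_const 2
    exact this.congr_deriv (by norm_num; ring)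
  have := (h1.exp).neg
  exact this.congr_deriv (by ring)

lemma integral_mul_E (x : ℝ) : ∫ t in Set.Ioi x, t * E t = E x := by
  have hint : IntegrableOn (fun t : ℝ => t * E t) (Set.Ioi x) := by
    have h := integrable_mul_exp_neg_mul_sq (by norm_num : (0:ℝ) < 1/2)
    exact (h.congr (by filter_upwards with t using by rw [E_eq])).integrableOn
  have := integral_Ioi_of_hasDerivAt_of_tendsto' (f := fun u => -E u)
    (f' := fun t => t * E t) (fun t _ => hasDerivAt_negE t) hint
    (by simpa using E_tendsto_zero.neg)
  simpa using this

lemma millsUpper {x : ℝ} (hx : 0 < x) : G x ≤ E x / x := by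
  have hmono : G x ≤ ∫ t in Set.Ioi x, (t / x) * E t := by
    apply setIntegral_mono_on hE_int.integrableOn
    · have h := integrable_mul_exp_neg_mul_sq (by norm_num : (0:ℝ) < 1/2)
      have h2 : Integrable (fun t : ℝ => t * E t) :=
        h.congr (by filter_upwards with t using by rw [E_eq])
      exact ((h2.div_const x).congr
        (by filter_upwards with t using by ring)).integrableOn
    · exact measurableSet_Ioi
    · intro t ht
      have h1 : 1 ≤ t / x := (one_le_div hx).mpr (le_of_lt ht)
      nlinarith [E_pos t]
  calc G x ≤ ∫ t in Set.Ioi x, (t / x) * E t := hmono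
    _ = (∫ t in Set.Ioi x, t * E t) / x := by
        rw [← integral_div]; congr 1; ext t; ring
    _ = E x / x := by rw [integral_mul_E]

lemma hasDerivAt_negE_div {t : ℝ} (ht : t ≠ 0) :
    HasDerivAt (fun u => -E u / u) ((1 + 1 / t ^ 2) * E t) t := by
  have h := (hasDerivAt_negE t).div (hasDerivAt_id t) ht
  exact h.congr_deriv (by simp only [id_eq]; field_simp; ring)

lemma integrable_one_add_E {x : ℝ} (hx : 0 < x) :
    IntegrableOn (fun t : ℝ => (1 + 1 / t ^ 2) * E t) (Set.Ioi x) := by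
  apply Integrable.mono ((hE_int.const_mul (1 + 1 / x ^ 2)).integrableOn)
  · apply ContinuousOn.aestronglyMeasurable _ measurableSet_Ioi
    apply ContinuousOn.mul
    · exact continuousOn_const.add (continuousOn_const.div
        (continuous_pow 2).continuousOn
        (fun t ht => pow_ne_zero 2 (ne_of_gt (hx.trans ht))))
    · exact Continuous.continuousOn (by unfold E; continuity)
  · filter_upwards [MeasureTheory.ae_restrict_mem measurableSet_Ioi] with t ht
    have htx : x < t := ht
    have hEt := E_pos t
    have h1 : (0:ℝ) < 1 + 1 / t ^ 2 := by positivity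
    have h1' : (0:ℝ) < 1 + 1 / x ^ 2 := by positivity
    have h2 : 1 / t ^ 2 ≤ 1 / x ^ 2 := by
      apply one_div_le_one_div_of_le (by positivity)
      nlinarith
    rw [Real.norm_eq_abs, Real.norm_eq_abs, abs_of_pos (mul_pos h1 hEt),
      abs_of_pos (mul_pos h1' hEt)]
    nlinarith

lemma integral_one_add_E {x : ℝ} (hx : 0 < x) :
    ∫ t in Set.Ioi x, (1 + 1 / t ^ 2) * E t = E x / x := by
  have htend : Tendsto (fun u : ℝ => -E u / u) atTop (nhds 0) := by
    have h1 : Tendsto (fun u : ℝ => E u * u⁻¹) atTop (nhds 0) := by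
      simpa using E_tendsto_zero.mul tendsto_inv_atTop_zero
    have := h1.neg
    simp only [neg_zero] at this
    exact this.congr (fun u => by ring)
  have := integral_Ioi_of_hasDerivAt_of_tendsto' (f := fun u => -E u / u)
    (f' := fun t => (1 + 1 / t ^ 2) * E t)
    (fun t ht => hasDerivAt_negE_div (ne_of_gt (lt_of_lt_of_le hx ht)))
    (integrable_one_add_E hx) htend
  rw [this]; field_simp; ring

lemma millsLower {x : ℝ} (hx : 0 < x) : x / (x ^ 2 + 1) * E x ≤ G x := by
  have hmono : ∫ t in Set.Ioi x, (1 + 1 / t ^ 2) * E t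
      ≤ ∫ t in Set.Ioi x, (1 + 1 / x ^ 2) * E t := by
    apply setIntegral_mono_on (integrable_one_add_E hx)
      ((hE_int.const_mul _).integrableOn) measurableSet_Ioi
    intro t ht
    have htx : x < t := ht
    have h2 : 1 / t ^ 2 ≤ 1 / x ^ 2 := by
      apply one_div_le_one_div_of_le (by positivity)
      nlinarith
    nlinarith [E_pos t]
  rw [integral_one_add_E hx, MeasureTheory.integral_const_mul] at hmono
  have h3 : (0:ℝ) < 1 + 1 / x ^ 2 := by positivity
  have heq : x / (x ^ 2 + 1) * E x = (E x / x) / (1 + 1 / x ^ 2) := by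
    field_simp
  rw [heq]
  exact (div_le_iff₀ h3).mpr (by rw [mul_comm]; exact hmono)

noncomputable def Cg : ℝ := (2 * Real.pi) ^ (-(1 : ℝ) / 2)

lemma Cg_pos : 0 < Cg := Real.rpow_pos_of_pos (by positivity) _

lemma Phi_eq (x : ℝ) : Phi x = Cg * ∫ t in Set.Iic x, E t := rfl

lemma integral_E_univ : ∫ t, E t = Real.sqrt (2 * Real.pi) := by
  have h := integral_gaussian (1/2)
  rw [show Real.pi / (1/2) = 2 * Real.pi by ring] at h
  rw [← h]
  exact MeasureTheory.integral_congr_ae (by filter_upwards with t using E_eq t)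

lemma Cg_mul_sqrt : Cg * Real.sqrt (2 * Real.pi) = 1 := by
  have h2π : (0:ℝ) < 2 * Real.pi := by positivity
  rw [Real.sqrt_eq_rpow]
  unfold Cg
  rw [← Real.rpow_add h2π]
  norm_num

lemma Phi_eq' (x : ℝ) : Phi x = 1 - Cg * G x := by
  rw [Phi_eq, ← Cg_mul_sqrt, ← integral_E_univ]
  rw [← intervalIntegral.integral_Iic_add_Ioi hE_int.integrableOn hE_int.integrableOn]
  unfold G; ring

lemma Phi_sub_eq (a b : ℝ) : Phi b - Phi a = Cg * (G a - G b) := by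
  rw [Phi_eq' a, Phi_eq' b]; ring

lemma G_sub_pos {a b : ℝ} (hab : a < b) : 0 < G a - G b := by
  have hsplit : G a = (∫ t in Set.Ioc a b, E t) + G b := by
    unfold G
    rw [← MeasureTheory.setIntegral_union (Set.Ioc_disjoint_Ioi le_rfl)
      measurableSet_Ioi hE_int.integrableOn hE_int.integrableOn,
      Set.Ioc_union_Ioi_eq_Ioi hab.le]
  have hpos : 0 < ∫ t in Set.Ioc a b, E t :=
    setIntegral_E_pos measurableSet_Ioc (by simp [hab])
  linarith

lemma Phi_lt_one (x : ℝ) : Phi x < 1 := by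
  have := mul_pos Cg_pos (G_pos x)
  rw [Phi_eq']; linarith

lemma Phi_pos (x : ℝ) : 0 < Phi x := by
  rw [Phi_eq x]
  exact mul_pos Cg_pos (setIntegral_E_pos measurableSet_Iic (by simp))

lemma Phi_strictMono {a b : ℝ} (hab : a < b) : Phi a < Phi b := by
  have := mul_pos Cg_pos (G_sub_pos hab)
  have h := Phi_sub_eq a b
  linarith

lemma hasDerivAt_Phi (x : ℝ) : HasDerivAt Phi (Cg * E x) x := by
  have key : ∀ y : ℝ, Phi y = Cg * ((∫ t in Set.Iic (0:ℝ), E t) + ∫ t in (0:ℝ)..y, E t) := by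
    intro y
    rw [Phi_eq, ← intervalIntegral.integral_Iic_sub_Iic hE_int.integrableOn hE_int.integrableOn]
    ring
  have hd : HasDerivAt (fun y : ℝ => ∫ t in (0:ℝ)..y, E t) (E x) x := by
    apply intervalIntegral.integral_hasDerivAt_right
      (hE_int.intervalIntegrable)
      (hE_int.aestronglyMeasurable.stronglyMeasurableAtFilter)
    exact Continuous.continuousAt (by unfold E; continuity)
  have := ((hd.const_add (∫ t in Set.Iic (0:ℝ), E t)).const_mul Cg)
  exact this.congr_of_eventuallyEq (by filter_upwards with y using key y)

lemma hasDerivAt_logit {t : ℝ} (h0 : 0 < t) (h1 : t < 1) :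
    HasDerivAt logit (1 / t + 1 / (1 - t)) t := by
  have ha : HasDerivAt Real.log t⁻¹ t := Real.hasDerivAt_log h0.ne'
  have hb : HasDerivAt (fun x : ℝ => Real.log (1 - x)) ((1 - t)⁻¹ * (-1)) t := by
    have hinner : HasDerivAt (fun x : ℝ => 1 - x) (-1) t := by
      simpa using (hasDerivAt_id t).const_sub 1
    exact (Real.hasDerivAt_log (by linarith)).comp t hinner
  have := ha.sub hb
  unfold logit
  exact this.congr_deriv (by field_simp; ring)

lemma sqrt_div_all {Λ : ℝ} (hΛ : 0 < Λ) (c : ℝ) :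
    Real.sqrt (c / Λ) = Real.sqrt c / Real.sqrt Λ := by
  rcases le_or_gt 0 c with hc | hc
  · exact Real.sqrt_div hc Λ
  · rw [Real.sqrt_eq_zero'.mpr (div_nonpos_iff.mpr (Or.inr ⟨hc.le, hΛ.le⟩)),
      Real.sqrt_eq_zero'.mpr hc.le, zero_div]

lemma P_eq {Cg Eα Eβ gp a b Gd : ℝ} (hCg : Cg ≠ 0) (hEα : Eα ≠ 0) (hGd : Gd ≠ 0) :
    (Cg * Eβ * (gp * b) - Cg * Eα * (gp * a)) / (Cg * Gd)
      = (b * (Eβ / Eα) - a) * (gp * (Eα / Gd)) := by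
  field_simp

lemma aux_alg {s t aa zz : ℝ} (hs : s ≠ 0) (ht : 0 < t) :
    1 / (2 * s) / t * (s / t * aa - zz) = aa / (2 * (t * t)) - zz * (1 / (2 * s) / t) := by
  field_simp

theorem limiting_derivative_of_logit_proxy_below
    (δL δU δ Λ z : ℝ) (hLU : δL < δU) (hδ : δ < δL) (hΛ : 0 < Λ) :
    Tendsto
      (deriv (fun c : ℝ => logit
        (Phi (Real.sqrt (c / Λ) * (δU - δ) - z) - Phi (Real.sqrt (c / Λ) * (δL - δ) - z))))
      atTop
      (nhds (-((δL - δ) ^ 2 / (2 * Λ)))) := by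
  set a := δL - δ with ha_def
  set b := δU - δ with hb_def
  have ha : 0 < a := by simp [ha_def]; linarith
  have hab : a < b := by simp [ha_def, hb_def]; linarith
  have hsΛ : 0 < Real.sqrt Λ := Real.sqrt_pos.mpr hΛ
  -- abbreviations
  set α : ℝ → ℝ := fun c => Real.sqrt c / Real.sqrt Λ * a - z with hα_def
  set β : ℝ → ℝ := fun c => Real.sqrt c / Real.sqrt Λ * b - z with hβ_def
  set τ : ℝ → ℝ := fun c => Phi (β c) - Phi (α c) with hτ_def
  set g' : ℝ → ℝ := fun c => 1 / (2 * Real.sqrt c) / Real.sqrt Λ with hg'_def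
  set D : ℝ → ℝ := fun c =>
    (1 / τ c + 1 / (1 - τ c)) * (Cg * E (β c) * (g' c * b) - Cg * E (α c) * (g' c * a))
    with hD_def
  -- rewrite the function
  have hfun : (fun c : ℝ => logit
        (Phi (Real.sqrt (c / Λ) * (δU - δ) - z) - Phi (Real.sqrt (c / Λ) * (δL - δ) - z)))
      = fun c => logit (τ c) := by
    funext c
    simp only [hτ_def, hα_def, hβ_def, sqrt_div_all hΛ c]
    rfl
  rw [hfun]
  -- basic facts for c > 0
  have hαβ : ∀ c : ℝ, 0 < c → α c < β c := by
    intro c hc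
    have : 0 < Real.sqrt c / Real.sqrt Λ := div_pos (Real.sqrt_pos.mpr hc) hsΛ
    simp only [hα_def, hβ_def]
    have := mul_lt_mul_of_pos_left hab this
    linarith
  have hτ01 : ∀ c : ℝ, 0 < c → 0 < τ c ∧ τ c < 1 := by
    intro c hc
    constructor
    · simp only [hτ_def]; linarith [Phi_strictMono (hαβ c hc)]
    · simp only [hτ_def]; linarith [Phi_lt_one (β c), Phi_pos (α c)]
  -- derivative formula
  have hderiv : ∀ c : ℝ, 0 < c →
      HasDerivAt (fun c => logit (τ c)) (D c) c := by
    intro c hc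
    have hsc : Real.sqrt c ≠ 0 := (Real.sqrt_pos.mpr hc).ne'
    have hA : HasDerivAt α (g' c * a) c :=
      (((Real.hasDerivAt_sqrt hc.ne').div_const _).mul_const a).sub_const z
    have hB : HasDerivAt β (g' c * b) c :=
      (((Real.hasDerivAt_sqrt hc.ne').div_const _).mul_const b).sub_const z
    have hT : HasDerivAt τ (Cg * E (β c) * (g' c * b) - Cg * E (α c) * (g' c * a)) c :=
      ((hasDerivAt_Phi (β c)).comp c hB).sub ((hasDerivAt_Phi (α c)).comp c hA)
    obtain ⟨h0, h1⟩ := hτ01 c hc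
    exact (hasDerivAt_logit h0 h1).comp c hT
  have hEv : (deriv fun c => logit (τ c)) =ᶠ[atTop] D := by
    filter_upwards [eventually_gt_atTop 0] with c hc
    exact (hderiv c hc).deriv
  refine Tendsto.congr' hEv.symm ?_
  -- now prove `Tendsto D atTop (𝓝 (-(a^2/(2*Λ))))`
  set gg : ℝ → ℝ := fun c => Real.sqrt c / Real.sqrt Λ with hgg_def
  set q : ℝ → ℝ := fun c => E (β c) / E (α c) with hq_def
  set N : ℝ → ℝ := fun c => Cg * E (β c) * (g' c * b) - Cg * E (α c) * (g' c * a) with hN_def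
  have hΛ_sq : Real.sqrt Λ * Real.sqrt Λ = Λ := Real.mul_self_sqrt hΛ.le
  have hsqrt_top : Tendsto Real.sqrt atTop atTop := by
    have h := tendsto_rpow_atTop (by norm_num : (0:ℝ) < 1/2)
    exact h.congr (fun x => (Real.sqrt_eq_rpow x).symm)
  have hg_top : Tendsto gg atTop atTop := hsqrt_top.atTop_div_const hsΛ
  have hα_top : Tendsto α atTop atTop := by
    have := (hg_top.atTop_mul_const ha)
    exact (tendsto_atTop_add_const_right _ (-z) this).congr
      (fun c => by simp [hα_def, hgg_def, sub_eq_add_neg])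
  have hβ_top : Tendsto β atTop atTop := by
    have := (hg_top.atTop_mul_const (ha.trans hab))
    exact (tendsto_atTop_add_const_right _ (-z) this).congr
      (fun c => by simp [hβ_def, hgg_def, sub_eq_add_neg])
  have hE_α : Tendsto (fun c => E (α c)) atTop (nhds 0) := E_tendsto_zero.comp hα_top
  have hE_β : Tendsto (fun c => E (β c)) atTop (nhds 0) := E_tendsto_zero.comp hβ_top
  have hg'0 : Tendsto g' atTop (nhds 0) := by
    have h2 : Tendsto (fun c : ℝ => 2 * Real.sqrt c) atTop atTop :=
      hsqrt_top.const_mul_atTop (by norm_num)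
    have h3 := h2.inv_tendsto_atTop
    have h4 := h3.div_const (Real.sqrt Λ)
    rw [zero_div] at h4
    exact h4.congr (fun c => by rw [hg'_def]; simp [one_div])
  have hN0 : Tendsto N atTop (nhds 0) := by
    have h1 := (hE_β.const_mul Cg).mul (hg'0.mul_const b)
    have h2 := (hE_α.const_mul Cg).mul (hg'0.mul_const a)
    have h := h1.sub h2
    rw [show Cg * 0 * (0 * b) - Cg * 0 * (0 * a) = (0:ℝ) by ring] at h
    exact h
  have hGα0 : Tendsto (fun c => G (α c)) atTop (nhds 0) := by
    apply tendsto_of_tendsto_of_tendsto_of_le_of_le' tendsto_const_nhds hE_α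
    · filter_upwards with c using G_nonneg _
    · filter_upwards [hα_top.eventually_ge_atTop 1] with c hc
      calc G (α c) ≤ E (α c) / α c := millsUpper (by linarith)
        _ ≤ E (α c) := div_le_self (E_pos _).le hc
  have hGβ0 : Tendsto (fun c => G (β c)) atTop (nhds 0) := by
    apply tendsto_of_tendsto_of_tendsto_of_le_of_le' tendsto_const_nhds hE_β
    · filter_upwards with c using G_nonneg _
    · filter_upwards [hβ_top.eventually_ge_atTop 1] with c hc
      calc G (β c) ≤ E (β c) / β c := millsUpper (by linarith)
        _ ≤ E (β c) := div_le_self (E_pos _).le hc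
  have hτ0 : Tendsto τ atTop (nhds 0) := by
    have h := (hGα0.sub hGβ0).const_mul Cg
    simp only [sub_self, mul_zero] at h
    exact h.congr (fun c => (Phi_sub_eq (α c) (β c)).symm)
  have hQ0 : Tendsto (fun c => N c / (1 - τ c)) atTop (nhds 0) := by
    have h1τ : Tendsto (fun c => 1 - τ c) atTop (nhds 1) := by
      simpa using (tendsto_const_nhds.sub hτ0)
    have h := hN0.div h1τ one_ne_zero
    rw [zero_div] at h
    exact h
  -- the exponential ratio
  set k : ℝ := z * (b - a) with hk_def
  set m : ℝ := (b ^ 2 - a ^ 2) / 2 with hm_def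
  have hm : 0 < m := by simp only [hm_def]; nlinarith
  have hq_eq : ∀ c, q c = Real.exp (k * gg c - m * gg c ^ 2) := by
    intro c
    simp only [hq_def]
    unfold E
    rw [← Real.exp_sub]
    congr 1
    simp only [hα_def, hβ_def, hgg_def, hk_def, hm_def]
    ring
  have hexp_bound : ∀ᶠ x : ℝ in atTop, k * x - m * x ^ 2 ≤ -x := by
    filter_upwards [eventually_ge_atTop ((k + 1) / m), eventually_ge_atTop 0] with x hx h0
    have : (k + 1) ≤ m * x := by
      rw [div_le_iff₀ hm] at hx; linarith [hx]
    nlinarith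
  have hq0 : Tendsto q atTop (nhds 0) := by
    have harg : Tendsto (fun x : ℝ => k * x - m * x ^ 2) atTop atBot := by
      apply tendsto_atBot_mono' atTop hexp_bound
      exact tendsto_neg_atTop_atBot
    have := (Real.tendsto_exp_atBot.comp harg).comp hg_top
    exact this.congr (fun c => (hq_eq c).symm)
  have hgq0 : Tendsto (fun c => gg c * q c) atTop (nhds 0) := by
    have key : Tendsto (fun x : ℝ => x * Real.exp (k * x - m * x ^ 2)) atTop (nhds 0) := by
      have hup := Real.tendsto_pow_mul_exp_neg_atTop_nhds_zero 1
      simp only [pow_one] at hup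
      apply tendsto_of_tendsto_of_tendsto_of_le_of_le' tendsto_const_nhds hup
      · filter_upwards [eventually_ge_atTop 0] with x hx
        positivity
      · filter_upwards [hexp_bound, eventually_ge_atTop 0] with x hx h0
        have := Real.exp_le_exp.mpr hx
        nlinarith [Real.exp_pos (k * x - m * x ^ 2)]
    have := key.comp hg_top
    exact this.congr (fun c => by rw [Function.comp_apply, ← hq_eq c])
  -- key quantities for the squeeze
  set u : ℝ → ℝ := fun c =>
    (2 * Real.sqrt c * Real.sqrt Λ) * (α c / (α c ^ 2 + 1) - q c / β c) with hu_def
  set W : ℝ → ℝ := fun c => g' c * (E (α c) / (G (α c) - G (β c))) with hW_def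
  have h2sΛ : ∀ c : ℝ, 2 * Real.sqrt c * Real.sqrt Λ = 2 * Λ * gg c := by
    intro c
    simp only [hgg_def]
    field_simp
    rw [Real.sq_sqrt hΛ.le]
  have hL : Tendsto (fun c => g' c * α c) atTop (nhds (a / (2 * Λ))) := by
    have h1 := (tendsto_const_nhds :
        Tendsto (fun _ : ℝ => a / (2 * Λ)) atTop (nhds (a / (2 * Λ)))).sub
      (hg'0.const_mul z)
    rw [show a / (2 * Λ) - z * 0 = a / (2 * Λ) by ring] at h1
    apply h1.congr'
    filter_upwards [eventually_gt_atTop 0] with c hc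
    have hsc : Real.sqrt c ≠ 0 := (Real.sqrt_pos.mpr hc).ne'
    simp only [hg'_def, hα_def]
    have haux := aux_alg (aa := a) (zz := z) hsc hsΛ
    rw [hΛ_sq] at haux
    exact haux.symm
  have hA : Tendsto (fun c => (2 * Real.sqrt c * Real.sqrt Λ) * (α c / (α c ^ 2 + 1)))
      atTop (nhds (2 * Λ / a)) := by
    have hφ : Tendsto (fun x : ℝ => (2 * Λ * x) * ((x * a - z) / ((x * a - z) ^ 2 + 1)))
        atTop (nhds (2 * Λ / a)) := by
      have hnum : Tendsto (fun x : ℝ => 2 * Λ * (a - z / x)) atTop (nhds (2 * Λ * a)) := by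
        have h := ((tendsto_const_nhds :
            Tendsto (fun _ : ℝ => a) atTop (nhds a)).sub
          ((tendsto_inv_atTop_zero).const_mul z)).const_mul (2 * Λ)
        rw [show a - z * 0 = a by ring] at h
        exact h.congr (fun x => by rw [div_eq_mul_inv])
      have hden : Tendsto (fun x : ℝ => (a - z / x) ^ 2 + 1 / x ^ 2) atTop (nhds (a ^ 2)) := by
        have h1 : Tendsto (fun x : ℝ => a - z / x) atTop (nhds a) := by
          have h := (tendsto_const_nhds :
              Tendsto (fun _ : ℝ => a) atTop (nhds a)).sub
            ((tendsto_inv_atTop_zero).const_mul z)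
          rw [show a - z * 0 = a by ring] at h
          exact h.congr (fun x => by rw [div_eq_mul_inv])
        have h2 : Tendsto (fun x : ℝ => 1 / x ^ 2) atTop (nhds 0) := by
          have h := (tendsto_inv_atTop_zero :
              Tendsto (fun x : ℝ => x⁻¹) atTop (nhds 0)).mul
            (tendsto_inv_atTop_zero : Tendsto (fun x : ℝ => x⁻¹) atTop (nhds 0))
          rw [mul_zero] at h
          exact h.congr (fun x => by rw [one_div, sq, mul_inv])
        have h3 := (h1.pow 2).add h2
        rw [add_zero] at h3
        exact h3
      have hdiv := hnum.div hden (pow_ne_zero 2 ha.ne')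
      have hval : 2 * Λ * a / a ^ 2 = 2 * Λ / a := by
        field_simp
      rw [hval] at hdiv
      apply hdiv.congr'
      filter_upwards [eventually_gt_atTop 0] with x hx
      have hx0 : x ≠ 0 := hx.ne'
      have hd : (x * a - z) ^ 2 + 1 > 0 := by positivity
      rw [Pi.div_apply]
      field_simp
    have := hφ.comp hg_top
    apply this.congr
    intro c
    simp only [Function.comp_apply, h2sΛ c, hα_def, hgg_def]
  have hB0 : Tendsto (fun c => (2 * Real.sqrt c * Real.sqrt Λ) * (q c / β c))
      atTop (nhds 0) := by
    have h1 := (hgq0.const_mul (2 * Λ)).mul hβ_top.inv_tendsto_atTop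
    simp only [mul_zero, zero_mul] at h1
    apply h1.congr
    intro c
    rw [h2sΛ c]
    simp only [Pi.inv_apply, div_eq_mul_inv]
    ring
  have hu : Tendsto u atTop (nhds (2 * Λ / a)) := by
    have := hA.sub hB0
    rw [sub_zero] at this
    exact this.congr (fun c => by rw [hu_def]; ring)
  have hu_pos : ∀ᶠ c in atTop, 0 < u c :=
    hu.eventually (lt_mem_nhds (by positivity))
  have hUinv : Tendsto (fun c => (u c)⁻¹) atTop (nhds (a / (2 * Λ))) := by
    have := hu.inv₀ (by positivity)
    rwa [inv_div] at this
  have hW : Tendsto W atTop (nhds (a / (2 * Λ))) := by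
    apply tendsto_of_tendsto_of_tendsto_of_le_of_le' hL hUinv
    · -- g' c * α c ≤ W c
      filter_upwards [eventually_gt_atTop 0, hα_top.eventually_ge_atTop 1] with c hc h1
      have hsc : 0 < Real.sqrt c := Real.sqrt_pos.mpr hc
      have hg'pos : 0 < g' c := by rw [hg'_def]; positivity
      have hαpos : 0 < α c := by linarith
      have hGd : 0 < G (α c) - G (β c) := G_sub_pos (hαβ c hc)
      have h2 : G (α c) - G (β c) ≤ E (α c) / α c := by
        have := millsUpper hαpos
        have := G_pos (β c)
        linarith
      have key : α c ≤ E (α c) / (G (α c) - G (β c)) := by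
        have heq : α c = E (α c) / (E (α c) / α c) := by
          rw [div_div_eq_mul_div, mul_comm, mul_div_assoc, div_self (E_pos (α c)).ne', mul_one]
        conv_lhs => rw [heq]
        gcongr
        all_goals first
          | exact (E_pos _).le
          | exact hGd
          | exact h2
      simp only [hW_def]
      exact mul_le_mul_of_nonneg_left key hg'pos.le
    · -- W c ≤ (u c)⁻¹
      filter_upwards [eventually_gt_atTop 0, hα_top.eventually_ge_atTop 1,
        hβ_top.eventually_ge_atTop 1, hu_pos] with c hc h1 h2 hup
      have hsc : 0 < Real.sqrt c := Real.sqrt_pos.mpr hc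
      have hαpos : 0 < α c := by linarith
      have hβpos : 0 < β c := by linarith
      have hGd : 0 < G (α c) - G (β c) := G_sub_pos (hαβ c hc)
      set r : ℝ := α c / (α c ^ 2 + 1) - q c / β c with hr_def
      have h2s : 0 < 2 * Real.sqrt c * Real.sqrt Λ := by positivity
      have hr : 0 < r := by
        by_contra hcon
        push_neg at hcon
        have : u c ≤ 0 := by
          rw [hu_def]
          exact mul_nonpos_of_nonneg_of_nonpos h2s.le hcon
        linarith
      have hEβq : E (β c) = q c * E (α c) := by
        simp only [hq_def]
        rw [div_mul_cancel₀ _ (E_pos _).ne']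
      have hGd_lb : E (α c) * r ≤ G (α c) - G (β c) := by
        have hml := millsLower hαpos
        have hmu := millsUpper hβpos
        have e1 : E (α c) * r = α c / (α c ^ 2 + 1) * E (α c) - q c * E (α c) / β c := by
          rw [hr_def]; ring
        have e2 : E (β c) / β c = q c * E (α c) / β c := by rw [hEβq]
        have hGβ' : G (β c) ≤ q c * E (α c) / β c := hmu.trans_eq e2
        rw [e1]
        linarith [hml, hGβ']
      have hkey : E (α c) / (G (α c) - G (β c)) ≤ 1 / r := by
        have hEr : 0 < E (α c) * r := mul_pos (E_pos _) hr
        have step : E (α c) / (G (α c) - G (β c)) ≤ E (α c) / (E (α c) * r) := by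
          gcongr
          all_goals first
            | exact (E_pos _).le
            | exact hEr
            | exact hGd_lb
        have heq : E (α c) / (E (α c) * r) = 1 / r := by
          rw [div_eq_div_iff hEr.ne' hr.ne']
          ring
        rw [heq] at step
        exact step
      have hfinal : g' c * (1 / r) = (u c)⁻¹ := by
        simp only [hu_def, hg'_def]
        rw [← hr_def, mul_inv]
        field_simp [hsc.ne', hsΛ.ne', hr.ne']
      simp only [hW_def]
      calc g' c * (E (α c) / (G (α c) - G (β c))) ≤ g' c * (1 / r) := by
            apply mul_le_mul_of_nonneg_left hkey
            rw [hg'_def]; positivity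
        _ = (u c)⁻¹ := hfinal
  -- main term
  have hP : Tendsto (fun c => N c / τ c) atTop (nhds (-(a ^ 2 / (2 * Λ)))) := by
    have hlim : Tendsto (fun c => (b * q c - a) * W c) atTop
        (nhds ((b * 0 - a) * (a / (2 * Λ)))) :=
      (((hq0.const_mul b).sub tendsto_const_nhds).mul hW)
    have hval : (b * 0 - a) * (a / (2 * Λ)) = -(a ^ 2 / (2 * Λ)) := by ring
    rw [hval] at hlim
    apply hlim.congr'
    filter_upwards [eventually_gt_atTop 0] with c hc
    have hsc : 0 < Real.sqrt c := Real.sqrt_pos.mpr hc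
    have hGd : 0 < G (α c) - G (β c) := G_sub_pos (hαβ c hc)
    have hτeq : τ c = Cg * (G (α c) - G (β c)) := Phi_sub_eq (α c) (β c)
    simp only [hN_def, hW_def, hq_def]
    rw [hτeq]
    exact (P_eq Cg_pos.ne' (E_pos _).ne' hGd.ne').symm
  -- put it together
  have hDPQ : D = fun c => N c / τ c + N c / (1 - τ c) := by
    funext c
    rw [hD_def]
    simp only [← hN_def]
    ring
  rw [hDPQ]
  have := hP.add hQ0
  simpa using this
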